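/- arXiv:2307.03317 — 2 statements merged into one kernel-verified Lean document; each statement's English description precedes it below -/
import Mathlib

section
/- Under the linear model Y = Xβ + ε with i.i.d. mean-zero errors of variance σ², the expected squared same-X prediction error of the fitted-value shrinkage estimator is E‖Xβ̂^{(γ)} − Xβ‖² = σ²(γ²r + 1 − γ²) + (1−γ)²‖μ − P_1μ‖², where r = rank(X) and μ = Xβ. -/
open Matrix MeasureTheory

lemma trace_eq_rank_of_proj {n : ℕ} (H : Matrix (Fin n) (Fin n) ℝ) (hid : H * H = H) :
    H.trace = (H.rank : ℝ) := by
  set f := H.mulVecLin with hf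
  have hff : f ∘ₗ f = f := by
    rw [hf, ← Matrix.mulVecLin_mul, hid]
  have hproj : LinearMap.IsProj (LinearMap.range f) f := by
    refine ⟨fun x => LinearMap.mem_range_self f x, ?_⟩
    rintro x ⟨y, rfl⟩
    calc f (f y) = (f ∘ₗ f) y := rfl
    _ = f y := by rw [hff]
  have h1 : LinearMap.trace ℝ _ f = (Module.finrank ℝ (LinearMap.range f) : ℝ) :=
    hproj.trace
  have h2 : LinearMap.trace ℝ _ f = H.trace := by
    rw [LinearMap.trace_eq_matrix_trace ℝ (Pi.basisFun ℝ (Fin n)),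
      LinearMap.toMatrix_eq_toMatrix']
    rw [hf, ← Matrix.toLin'_apply', LinearMap.toMatrix'_toLin']
  rw [← h2, h1]
  rfl

lemma quad_integral {Ω : Type*} [MeasurableSpace Ω] (P : Measure Ω) [IsProbabilityMeasure P]
    {n : ℕ} (σ2 : ℝ) (ε : Ω → Fin n → ℝ)
    (hint1 : ∀ i, Integrable (fun ω => ε ω i) P)
    (hint2 : ∀ i j, Integrable (fun ω => ε ω i * ε ω j) P)
    (hmean : ∀ i, ∫ ω, ε ω i ∂P = 0)
    (hvar : ∀ i, ∫ ω, (ε ω i) ^ 2 ∂P = σ2)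
    (hindep : ∀ i j, i ≠ j → ∫ ω, ε ω i * ε ω j ∂P = 0)
    (a : Fin n → ℝ) (c : ℝ) :
    Integrable (fun ω => ((∑ k, a k * ε ω k) + c) ^ 2) P ∧
      ∫ ω, ((∑ k, a k * ε ω k) + c) ^ 2 ∂P = σ2 * (∑ k, (a k) ^ 2) + c ^ 2 := by
  have hfun : ∀ ω, ((∑ k, a k * ε ω k) + c) ^ 2
      = (∑ k, ∑ l, (a k * a l) * (ε ω k * ε ω l))
        + ((∑ k, (2 * c * a k) * ε ω k) + c ^ 2) := by
    intro ω
    have h1 : (∑ k, a k * ε ω k) ^ 2 = ∑ k, ∑ l, (a k * a l) * (ε ω k * ε ω l) := by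
      rw [sq, Finset.sum_mul_sum]
      exact Finset.sum_congr rfl fun k _ => Finset.sum_congr rfl fun l _ => by ring
    have h2 : 2 * c * (∑ k, a k * ε ω k) = ∑ k, (2 * c * a k) * ε ω k := by
      rw [Finset.mul_sum]
      exact Finset.sum_congr rfl fun k _ => by ring
    calc ((∑ k, a k * ε ω k) + c) ^ 2
        = (∑ k, a k * ε ω k) ^ 2 + (2 * c * (∑ k, a k * ε ω k) + c ^ 2) := by ring
      _ = _ := by rw [h1, h2]
  have Iq : Integrable (fun ω => ∑ k, ∑ l, (a k * a l) * (ε ω k * ε ω l)) P :=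
    integrable_finset_sum _ fun k _ => integrable_finset_sum _ fun l _ =>
      ((hint2 k l).const_mul _)
  have Il : Integrable (fun ω => ∑ k, (2 * c * a k) * ε ω k) P :=
    integrable_finset_sum _ fun k _ => (hint1 k).const_mul _
  have Itot : Integrable (fun ω => ((∑ k, a k * ε ω k) + c) ^ 2) P := by
    have := (Iq.add (Il.add (integrable_const (c ^ 2))))
    exact this.congr (Filter.Eventually.of_forall fun ω => (hfun ω).symm)
  refine ⟨Itot, ?_⟩
  have Ilc : Integrable (fun ω => (∑ k, (2 * c * a k) * ε ω k) + c ^ 2) P := by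
    exact Il.add (integrable_const (c ^ 2))
  rw [integral_congr_ae (Filter.Eventually.of_forall hfun),
    integral_add Iq Ilc,
    integral_add Il (integrable_const (c ^ 2)), integral_finset_sum _ (fun k _ =>
      integrable_finset_sum _ fun l _ => ((hint2 k l).const_mul _)),
    integral_finset_sum _ (fun k _ => (hint1 k).const_mul _)]
  have hI : ∀ k l : Fin n, ∫ ω, ε ω k * ε ω l ∂P = if k = l then σ2 else 0 := by
    intro k l
    split_ifs with h
    · subst h
      rw [← hvar k]
      exact integral_congr_ae (Filter.Eventually.of_forall fun ω => (pow_two (ε ω k)).symm)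
    · exact hindep k l h
  have hdiag : ∀ k : Fin n, ∑ l, (a k * a l) * (if k = l then σ2 else 0) = σ2 * a k ^ 2 := by
    intro k
    rw [Finset.sum_eq_single k]
    · simp; ring
    · intro l _ hl; simp [Ne.symm hl]
    · simp
  have hinner : ∀ k : Fin n, ∫ ω, ∑ l, (a k * a l) * (ε ω k * ε ω l) ∂P = σ2 * a k ^ 2 := by
    intro k
    rw [integral_finset_sum _ (fun l _ => ((hint2 k l).const_mul _))]
    simp only [MeasureTheory.integral_const_mul, hI]
    exact hdiag k
  simp only [MeasureTheory.integral_const_mul, hmean, mul_zero, Finset.sum_const_zero, zero_add]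
  rw [integral_const]
  simp only [measure_univ, probReal_univ, ENNReal.toReal_one, smul_eq_mul, one_mul]
  rw [Finset.sum_congr rfl fun k _ => hinner k, ← Finset.mul_sum]

/-- The four Penrose conditions defining the Moore–Penrose pseudoinverse. -/
def IsMoorePenrose {n p : ℕ} (X : Matrix (Fin n) (Fin p) ℝ)
    (Xp : Matrix (Fin p) (Fin n) ℝ) : Prop :=
  X * Xp * X = X ∧ Xp * X * Xp = Xp ∧ (X * Xp)ᵀ = X * Xp ∧ (Xp * X)ᵀ = Xp * X

/-- Proposition 1: under `Y = Xβ + ε` with i.i.d. mean-zero variance-`σ²` errors,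
`E‖Xβ̂^{(γ)} − Xβ‖² = σ²(γ² r + 1 − γ²) + (1−γ)²‖μ − P₁μ‖²`, where `r = rank X`
and `μ = Xβ`. -/
theorem stmt_3 {Ω : Type*} [MeasurableSpace Ω] (P : Measure Ω) [IsProbabilityMeasure P]
    {n p : ℕ} (hn : 0 < n) (X : Matrix (Fin n) (Fin (p + 1)) ℝ)
    (hcol : ∀ i, X i 0 = 1)
    (Xp : Matrix (Fin (p + 1)) (Fin n) ℝ) (hmp : IsMoorePenrose X Xp)
    (β : Fin (p + 1) → ℝ) (σ2 : ℝ) (hσ : 0 < σ2)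
    (ε : Ω → Fin n → ℝ)
    (hmeas : ∀ i, Measurable fun ω => ε ω i)
    (hint1 : ∀ i, Integrable (fun ω => ε ω i) P)
    (hint2 : ∀ i j, Integrable (fun ω => ε ω i * ε ω j) P)
    (hmean : ∀ i, ∫ ω, ε ω i ∂P = 0)
    (hvar : ∀ i, ∫ ω, (ε ω i) ^ 2 ∂P = σ2)
    (hindep : ∀ i j, i ≠ j → ∫ ω, ε ω i * ε ω j ∂P = 0)
    (Y : Ω → Fin n → ℝ) (hY : ∀ ω, Y ω = X.mulVec β + ε ω)
    (μv : Fin n → ℝ) (hμ : μv = X.mulVec β)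
    (γ : ℝ)
    (βhat : Ω → Fin (p + 1) → ℝ)
    (hβhat : ∀ ω, βhat ω
      = Xp.mulVec (fun i => γ * Y ω i + (1 - γ) * ((∑ j, Y ω j) / n))) :
    ∫ ω, ∑ i, (X.mulVec (βhat ω) i - μv i) ^ 2 ∂P
      = σ2 * (γ ^ 2 * (X.rank : ℝ) + 1 - γ ^ 2)
        + (1 - γ) ^ 2 * ∑ i, (μv i - (∑ j, μv j) / n) ^ 2 := by
  obtain ⟨h1, h2, h3, h4⟩ := hmp
  have hn' : (n : ℝ) ≠ 0 := Nat.cast_ne_zero.mpr hn.ne'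
  set H := X * Xp with hH
  have hidem : H * H = H := by rw [hH, ← Matrix.mul_assoc, h1]
  have hsym : ∀ i k, H k i = H i k := by
    intro i k
    have := congrFun (congrFun h3 i) k
    simpa [Matrix.transpose_apply] using this
  have hrow : ∀ i, ∑ k, H i k = 1 := by
    intro i
    have hx : (H * X) i 0 = X i 0 := by rw [hH, h1]
    rw [Matrix.mul_apply] at hx
    simp only [hcol, mul_one] at hx
    exact hx
  have hμfix : ∀ i, ∑ k, H i k * μv k = μv i := by
    intro i
    have hv : H.mulVec μv = μv := by
      rw [hμ, Matrix.mulVec_mulVec, hH, h1]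
    have := congrFun hv i
    simpa [Matrix.mulVec, dotProduct] using this
  have hsq : ∀ i, ∑ k, (H i k) ^ 2 = H i i := by
    intro i
    have hmm : ∑ k, H i k * H k i = (H * H) i i := (Matrix.mul_apply).symm
    rw [hidem] at hmm
    rw [← hmm]
    exact Finset.sum_congr rfl fun k _ => by rw [pow_two, hsym i k]
  have hrank : H.rank = X.rank := by
    refine le_antisymm ?_ ?_
    · rw [hH]; exact Matrix.rank_mul_le_left X Xp
    · have := Matrix.rank_mul_le_left (X * Xp) X
      rw [h1] at this
      exact this
  have htrace : ∑ i, ∑ k, (H i k) ^ 2 = (X.rank : ℝ) := by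
    rw [Finset.sum_congr rfl fun i _ => hsq i]
    have ht := trace_eq_rank_of_proj H hidem
    rw [hrank] at ht
    rw [← ht]
    rfl
  -- pointwise identity
  have hpt : ∀ ω i, X.mulVec (βhat ω) i - μv i
      = (∑ k, (γ * H i k + (1 - γ) / n) * ε ω k)
        + (1 - γ) * ((∑ j, μv j) / n - μv i) := by
    intro ω i
    have hYk : ∀ k, Y ω k = μv k + ε ω k := by
      intro k; rw [hY ω, ← hμ]; rfl
    rw [hβhat ω, Matrix.mulVec_mulVec, ← hH]
    simp only [Matrix.mulVec, dotProduct]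
    simp only [hYk]
    rw [show (∑ j, (μv j + ε ω j)) = (∑ j, μv j) + (∑ j, ε ω j) from Finset.sum_add_distrib]
    have expand : ∑ k, H i k * (γ * (μv k + ε ω k)
          + (1 - γ) * (((∑ j, μv j) + (∑ j, ε ω j)) / n))
        = γ * (∑ k, H i k * μv k) + γ * (∑ k, H i k * ε ω k)
          + ((1 - γ) * (((∑ j, μv j) + (∑ j, ε ω j)) / n)) * (∑ k, H i k) := by
      rw [Finset.sum_congr rfl (fun k _ =>
        (by ring : H i k * (γ * (μv k + ε ω k)
            + (1 - γ) * (((∑ j, μv j) + (∑ j, ε ω j)) / n))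
          = γ * (H i k * μv k) + γ * (H i k * ε ω k)
            + ((1 - γ) * (((∑ j, μv j) + (∑ j, ε ω j)) / n)) * H i k))]
      rw [Finset.sum_add_distrib, Finset.sum_add_distrib, ← Finset.mul_sum,
        ← Finset.mul_sum, ← Finset.mul_sum]
    rw [expand, hμfix i, hrow i]
    have expand2 : ∑ k, (γ * H i k + (1 - γ) / n) * ε ω k
        = γ * (∑ k, H i k * ε ω k) + ((1 - γ) / n) * (∑ k, ε ω k) := by
      rw [Finset.sum_congr rfl (fun k _ =>
        (by ring : (γ * H i k + (1 - γ) / n) * ε ω k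
          = γ * (H i k * ε ω k) + ((1 - γ) / n) * ε ω k))]
      rw [Finset.sum_add_distrib, ← Finset.mul_sum, ← Finset.mul_sum]
    rw [expand2]
    field_simp
    ring
  have hq := fun i => quad_integral P σ2 ε hint1 hint2 hmean hvar hindep
    (fun k => γ * H i k + (1 - γ) / n) ((1 - γ) * ((∑ j, μv j) / n - μv i))
  have hmain : ∫ ω, ∑ i, (X.mulVec (βhat ω) i - μv i) ^ 2 ∂P
      = ∑ i, (σ2 * (∑ k, (γ * H i k + (1 - γ) / n) ^ 2)
          + ((1 - γ) * ((∑ j, μv j) / n - μv i)) ^ 2) := by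
    rw [integral_finset_sum]
    · exact Finset.sum_congr rfl fun i _ => by
        rw [integral_congr_ae (Filter.Eventually.of_forall
          (fun ω => by rw [hpt ω i]))]
        exact (hq i).2
    · intro i _
      exact ((hq i).1).congr (Filter.Eventually.of_forall fun ω =>
        congrArg (· ^ 2) (hpt ω i).symm)
  rw [hmain]
  -- algebra
  have step1 : ∀ i, ∑ k, (γ * H i k + (1 - γ) / n) ^ 2
      = γ ^ 2 * (∑ k, (H i k) ^ 2) + (2 * γ * (1 - γ) / n) + (n : ℝ) * ((1 - γ) / n) ^ 2 := by
    intro i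
    rw [Finset.sum_congr rfl (fun k _ =>
      (by ring : (γ * H i k + (1 - γ) / n) ^ 2
        = γ ^ 2 * (H i k) ^ 2 + (2 * γ * (1 - γ) / n) * H i k + ((1 - γ) / n) ^ 2))]
    rw [Finset.sum_add_distrib, Finset.sum_add_distrib, ← Finset.mul_sum,
      ← Finset.mul_sum, hrow i, Finset.sum_const, Finset.card_univ, Fintype.card_fin,
      nsmul_eq_mul, mul_one]
  rw [Finset.sum_add_distrib]
  rw [Finset.sum_congr rfl (fun i (_ : i ∈ Finset.univ) => by rw [step1 i])]
  have hsecond : ∑ i, ((1 - γ) * ((∑ j, μv j) / n - μv i)) ^ 2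
      = (1 - γ) ^ 2 * ∑ i, (μv i - (∑ j, μv j) / n) ^ 2 := by
    rw [Finset.mul_sum]
    exact Finset.sum_congr rfl fun i _ => by ring
  rw [Finset.sum_congr rfl (fun i (_ : i ∈ Finset.univ) =>
    (by ring : σ2 * (γ ^ 2 * (∑ k, (H i k) ^ 2) + 2 * γ * (1 - γ) / (n : ℝ)
        + (n : ℝ) * ((1 - γ) / n) ^ 2)
      = (σ2 * γ ^ 2) * (∑ k, (H i k) ^ 2)
        + σ2 * (2 * γ * (1 - γ) / (n : ℝ) + (n : ℝ) * ((1 - γ) / n) ^ 2)))]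
  rw [Finset.sum_add_distrib, ← Finset.mul_sum, htrace, Finset.sum_const,
    Finset.card_univ, Fintype.card_fin, nsmul_eq_mul, hsecond]
  field_simp
  ring
end

section
/- The global minimizer of f(β*, η) = (1/(2n))‖Yη − Xβ*‖² − log(η) + α‖β*_{−1}‖² over (β*, η) ∈ ℝ^p × (0,∞) is given by η̂ = (n^{-1} Y'(I − X(X'X + 2nαM)^{-1}X')Y)^{-1/2} and β̂* = η̂ (X'X + 2nαM)^{-1} X'Y, where M = diag(0,1,…,1) ∈ ℝ^{p×p}, provided X'X + 2nαM is invertible and Y'(I − X(X'X+2nαM)^{-1}X')Y > 0. -/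
open Matrix

/-- The global minimizer of the reparametrized penalized likelihood objective
`f(β*,η) = (1/(2n))‖Yη − Xβ*‖² − log η + α‖β*₋₁‖²` over `ℝ^p × (0,∞)` is
`η̂ = (n⁻¹ Y'(I − X(X'X+2nαM)⁻¹X')Y)^{-1/2}` and
`β̂* = η̂ (X'X+2nαM)⁻¹X'Y`, where `M = diag(0,1,…,1)`. -/
theorem stmt_13 {n p : ℕ} (hn : 0 < n) (Y : Fin n → ℝ)
    (X : Matrix (Fin n) (Fin (p + 1)) ℝ) (α : ℝ) (hα : 0 ≤ α)
    (M : Matrix (Fin (p + 1)) (Fin (p + 1)) ℝ)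
    (hM : M = Matrix.diagonal fun i => if i = 0 then 0 else 1)
    (S : Matrix (Fin (p + 1)) (Fin (p + 1)) ℝ)
    (hS : S = Xᵀ * X + (2 * n * α) • M) (hinv : IsUnit S.det)
    (q : ℝ) (hq : q = Y ⬝ᵥ (Y - X.mulVec (S⁻¹.mulVec (Xᵀ.mulVec Y))))
    (hqpos : 0 < q)
    (ηhat : ℝ) (hη : ηhat = (q / n) ^ (-(1 / 2) : ℝ))
    (βhat : Fin (p + 1) → ℝ) (hβ : βhat = ηhat • S⁻¹.mulVec (Xᵀ.mulVec Y))
    (f : (Fin (p + 1) → ℝ) × ℝ → ℝ)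
    (hf : ∀ z, f z
      = (1 / (2 * n)) * ∑ i, (z.2 * Y i - X.mulVec z.1 i) ^ 2
        - Real.log z.2
        + α * ∑ j ∈ Finset.univ.erase (0 : Fin (p + 1)), (z.1 j) ^ 2) :
    0 < ηhat ∧ ∀ b : Fin (p + 1) → ℝ, ∀ η : ℝ, 0 < η →
      f (βhat, ηhat) ≤ f (b, η) := by
  have hn' : (0:ℝ) < n := by exact_mod_cast hn
  have hqn : (0:ℝ) < q / n := div_pos hqpos hn'
  have hηpos : 0 < ηhat := by rw [hη]; exact Real.rpow_pos_of_pos hqn _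
  set u : Fin (p+1) → ℝ := Xᵀ.mulVec Y with hu
  set v : Fin (p+1) → ℝ := S⁻¹.mulVec u with hv
  have hSv : S.mulVec v = u := by
    rw [hv, mulVec_mulVec, Matrix.mul_nonsing_inv _ hinv, one_mulVec]
  have hSsym : Sᵀ = S := by
    rw [hS, transpose_add, transpose_smul, transpose_mul, transpose_transpose,
      hM, diagonal_transpose]
  have hsym : ∀ a c : Fin (p+1) → ℝ, a ⬝ᵥ S.mulVec c = c ⬝ᵥ S.mulVec a := by
    intro a c
    rw [dotProduct_mulVec, ← hSsym, vecMul_transpose, dotProduct_comm, hSsym]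
  -- quadratic form of M
  have hMq : ∀ w : Fin (p+1) → ℝ, w ⬝ᵥ M.mulVec w = ∑ j, if j = 0 then 0 else w j ^ 2 := by
    intro w
    rw [hM]
    refine Finset.sum_congr rfl fun j _ => ?_
    rw [mulVec_diagonal]
    by_cases h : j = 0 <;> simp [h] <;> ring
  have hMnonneg : ∀ w : Fin (p+1) → ℝ, 0 ≤ w ⬝ᵥ M.mulVec w := by
    intro w; rw [hMq]
    refine Finset.sum_nonneg fun j _ => ?_
    by_cases h : j = 0 <;> simp [h] <;> positivity
  -- X'X quadratic form
  have hXq : ∀ w : Fin (p+1) → ℝ, w ⬝ᵥ (Xᵀ * X).mulVec w = (X.mulVec w) ⬝ᵥ (X.mulVec w) := by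
    intro w
    rw [← mulVec_mulVec, dotProduct_mulVec, vecMul_transpose]
  have hSq : ∀ w : Fin (p+1) → ℝ, 0 ≤ w ⬝ᵥ S.mulVec w := by
    intro w
    rw [hS, add_mulVec, dotProduct_add, smul_mulVec, dotProduct_smul, hXq]
    have h1 : 0 ≤ (X.mulVec w) ⬝ᵥ (X.mulVec w) :=
      Finset.sum_nonneg fun i _ => mul_self_nonneg _
    have h2 : 0 ≤ (2 * n * α) * (w ⬝ᵥ M.mulVec w) := by
      apply mul_nonneg (by positivity) (hMnonneg w)
    simpa using add_nonneg h1 h2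
  -- rewrite f in quadratic form
  have hF : ∀ b : Fin (p+1) → ℝ, ∀ η : ℝ, f (b, η) =
      (1/(2*(n:ℝ))) * (η^2 * (Y ⬝ᵥ Y) - 2*η*(b ⬝ᵥ u) + b ⬝ᵥ S.mulVec b) - Real.log η := by
    intro b η
    rw [hf]
    have e1 : ∑ i, (η * Y i - X.mulVec b i) ^ 2
        = η^2 * (Y ⬝ᵥ Y) - 2*η*(Y ⬝ᵥ X.mulVec b) + (X.mulVec b) ⬝ᵥ (X.mulVec b) := by
      simp only [dotProduct, Finset.mul_sum]
      rw [← Finset.sum_sub_distrib, ← Finset.sum_add_distrib]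
      exact Finset.sum_congr rfl fun i _ => by ring
    have e2 : Y ⬝ᵥ X.mulVec b = b ⬝ᵥ u := by
      rw [hu, mulVec_transpose, dotProduct_mulVec, dotProduct_comm]
    have e3 : α * ∑ j ∈ Finset.univ.erase (0 : Fin (p + 1)), (b j) ^ 2
        = α * (b ⬝ᵥ M.mulVec b) := by
      rw [hMq]
      congr 1
      rw [show Finset.univ.erase (0 : Fin (p+1)) = Finset.univ.filter (fun j => ¬ j = 0) by
        ext j; simp [Finset.mem_erase, and_comm], Finset.sum_filter]
      refine Finset.sum_congr rfl fun j _ => ?_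
      by_cases h : j = 0 <;> simp [h]
    have e4 : b ⬝ᵥ S.mulVec b = (X.mulVec b) ⬝ᵥ (X.mulVec b) + (2*n*α) * (b ⬝ᵥ M.mulVec b) := by
      rw [hS, add_mulVec, dotProduct_add, smul_mulVec, dotProduct_smul, hXq]
      simp [smul_eq_mul]
    rw [e1, e2, e3, e4]
    field_simp
    ring
  -- value at (η • v, η)
  have hval : ∀ η : ℝ, f (η • v, η) = q/(2*n) * η^2 - Real.log η := by
    intro η
    rw [hF]
    have e1 : (η • v) ⬝ᵥ u = η * (v ⬝ᵥ u) := by simp [smul_dotProduct, smul_eq_mul]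
    have e2 : (η • v) ⬝ᵥ S.mulVec (η • v) = η^2 * (v ⬝ᵥ u) := by
      rw [mulVec_smul, dotProduct_smul, smul_dotProduct, hSv, smul_eq_mul, smul_eq_mul]
      ring
    have e3 : q = Y ⬝ᵥ Y - v ⬝ᵥ u := by
      rw [hq, dotProduct_sub]
      have : Y ⬝ᵥ X.mulVec v = v ⬝ᵥ u := by
        rw [hu, mulVec_transpose, dotProduct_mulVec, dotProduct_comm]
      rw [this]
    rw [e1, e2]
    have hne : (n:ℝ) ≠ 0 := ne_of_gt hn'
    field_simp
    nlinarith [e3]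
  -- minimization over b for fixed η
  have hmin_b : ∀ b : Fin (p+1) → ℝ, ∀ η : ℝ, f (η • v, η) ≤ f (b, η) := by
    intro b η
    rw [hF, hF]
    have hw := hSq (b - η • v)
    have expand : (b - η • v) ⬝ᵥ S.mulVec (b - η • v)
        = b ⬝ᵥ S.mulVec b - 2 * η * (b ⬝ᵥ u) + η^2 * (v ⬝ᵥ u) := by
      rw [sub_dotProduct, mulVec_sub, dotProduct_sub, dotProduct_sub,
        mulVec_smul, dotProduct_smul, smul_dotProduct, smul_dotProduct,
        dotProduct_smul, hSv]
      have hvb : v ⬝ᵥ S.mulVec b = b ⬝ᵥ u := (hsym v b).trans (by rw [hSv])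
      rw [smul_eq_mul, smul_eq_mul, smul_eq_mul, smul_eq_mul, hvb]
      ring
    have e1 : (η • v) ⬝ᵥ u = η * (v ⬝ᵥ u) := by simp [smul_dotProduct, smul_eq_mul]
    have e2 : (η • v) ⬝ᵥ S.mulVec (η • v) = η^2 * (v ⬝ᵥ u) := by
      rw [mulVec_smul, dotProduct_smul, smul_dotProduct, hSv, smul_eq_mul, smul_eq_mul]
      ring
    rw [e1, e2]
    have hc : (0:ℝ) < 1/(2*(n:ℝ)) := by positivity
    have : 0 ≤ (1/(2*(n:ℝ))) * ((b - η • v) ⬝ᵥ S.mulVec (b - η • v)) :=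
      mul_nonneg (le_of_lt hc) hw
    rw [expand] at this
    nlinarith [this]
  -- scalar minimization over η
  have hηsq : ηhat^2 = n/q := by
    rw [hη, ← Real.rpow_natCast ((q/n) ^ (-(1/2) : ℝ)) 2, ← Real.rpow_mul (le_of_lt hqn)]
    norm_num
    rw [Real.rpow_neg_one, inv_div]
  have hmin_η : ∀ η : ℝ, 0 < η →
      q/(2*n) * ηhat^2 - Real.log ηhat ≤ q/(2*n) * η^2 - Real.log η := by
    intro η hηp
    have hlog : Real.log (η^2 / ηhat^2) ≤ η^2 / ηhat^2 - 1 :=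
      Real.log_le_sub_one_of_pos (by positivity)
    rw [Real.log_div (by positivity) (by positivity), Real.log_pow, Real.log_pow] at hlog
    have h1 : q/(2*n) * ηhat^2 = 1/2 := by
      rw [hηsq]; field_simp
    have h2 : ηhat^2 = n/q := hηsq
    have hd : η^2 / ηhat^2 = η^2 * q / n := by
      rw [h2]; field_simp
    rw [hd] at hlog
    push_cast at hlog
    have h3 : q/(2*(n:ℝ))*η^2 = (η^2*q/(n:ℝ))/2 := by field_simp
    linarith [hlog, h1, h3]
  refine ⟨hηpos, fun b η hηp => ?_⟩
  have : f (βhat, ηhat) = q/(2*n) * ηhat^2 - Real.log ηhat := by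
    rw [hβ]; exact hval ηhat
  rw [this]
  calc q/(2*n) * ηhat^2 - Real.log ηhat ≤ q/(2*n) * η^2 - Real.log η := hmin_η η hηp
    _ = f (η • v, η) := (hval η).symm
    _ ≤ f (b, η) := hmin_b b η
end
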